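/- Let X ∈ ℝ^{n×d} with all rows of Euclidean norm at most 1, y ∈ [0,1]ⁿ, and define L(D) = n ‖(XDXᵀ + nI)⁻¹ y‖². Then for all positive semidefinite D₁, D₂, |L(D₁) − L(D₂)| ≤ 2 ‖D₁ − D₂‖_F, i.e., L is 2-Lipschitz with respect to the Frobenius norm. -/

import Mathlib

open Matrix Finset MeasureTheory

noncomputable def opNorm {d : ℕ} (A : Matrix (Fin d) (Fin d) ℝ) : ℝ :=
  ‖Matrix.toEuclideanCLM (𝕜 := ℝ) A‖

noncomputable def frobNorm {m n : ℕ} (A : Matrix (Fin m) (Fin n) ℝ) : ℝ :=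
  Real.sqrt (∑ i, ∑ j, (A i j) ^ 2)

/-!
Write `A_D = X D Xᵀ + n I` and `v_D = A_D⁻¹ y`, so that `L D = n ‖v_D‖²`. For `D ⪰ 0` we have
`A_D ⪰ n I`, hence `n ‖v_D‖ ≤ ‖y‖ ≤ √n`. The resolvent identity
`A₁⁻¹ - A₂⁻¹ = A₁⁻¹ X (D₂ - D₁) Xᵀ A₂⁻¹` and `‖X‖_F² ≤ n` give `‖v₁ - v₂‖ ≤ ‖D₁ - D₂‖_F ‖v₂‖`.
Therefore `|L D₁ - L D₂| ≤ n ‖v₁ - v₂‖ (‖v₁‖ + ‖v₂‖)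
  ≤ ‖D₁ - D₂‖_F (√n ‖v₂‖) (√n ‖v₁‖ + √n ‖v₂‖) ≤ 2 ‖D₁ - D₂‖_F`.
-/

open WithLp (toLp)

section NormSq

variable {E : Type*} [SeminormedAddCommGroup E]

lemma abs_norm_sq_sub_norm_sq_le (a b : E) :
    |‖a‖ ^ 2 - ‖b‖ ^ 2| ≤ ‖a - b‖ * (‖a‖ + ‖b‖) := by
  rw [sq_sub_sq, abs_mul, abs_of_nonneg (by positivity : 0 ≤ ‖a‖ + ‖b‖), mul_comm]
  gcongr
  exact abs_norm_sub_norm_le a b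

lemma sq_mul_abs_norm_sq_sub_norm_sq_le {a b : E} {s r : ℝ} (hs : 0 ≤ s) (hr : 0 ≤ r)
    (ha : s * ‖a‖ ≤ 1) (hb : s * ‖b‖ ≤ 1) (hab : ‖a - b‖ ≤ r * ‖a‖) :
    s ^ 2 * |‖a‖ ^ 2 - ‖b‖ ^ 2| ≤ 2 * r :=
  calc s ^ 2 * |‖a‖ ^ 2 - ‖b‖ ^ 2| ≤ s ^ 2 * (r * ‖a‖ * (‖a‖ + ‖b‖)) := by
        gcongr
        exact (abs_norm_sq_sub_norm_sq_le a b).trans (by gcongr)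
    _ = r * (s * ‖a‖) * (s * ‖a‖ + s * ‖b‖) := by ring
    _ ≤ r * 1 * (1 + 1) :=
        mul_le_mul (mul_le_mul_of_nonneg_left ha hr) (add_le_add ha hb) (by positivity)
          (by simpa using hr)
    _ = 2 * r := by ring

end NormSq

section Euclidean

variable {ι : Type*} [Fintype ι]

lemma norm_toLp_sq (v : ι → ℝ) : ‖toLp 2 v‖ ^ 2 = ∑ i, v i ^ 2 :=
  EuclideanSpace.real_norm_sq_eq _

lemma norm_toLp_le_sqrt_card {v : ι → ℝ} (hv : ∀ i, |v i| ≤ 1) :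
    ‖toLp 2 v‖ ≤ √(Fintype.card ι) := by
  refine Real.le_sqrt_of_sq_le ?_
  rw [norm_toLp_sq]
  calc ∑ i, v i ^ 2 ≤ ∑ _i : ι, (1 : ℝ) :=
        Finset.sum_le_sum fun i _ => (sq_le_one_iff_abs_le_one _).2 (hv i)
    _ = Fintype.card ι := by simp

variable [DecidableEq ι] {A : Matrix ι ι ℝ} {c : ℝ}

lemma isUnit_of_posSemidef_sub_smul_one (hc : 0 < c) (hA : (A - c • 1).PosSemidef) :
    IsUnit A := by
  simpa using (Matrix.PosDef.posSemidef_add hA (Matrix.PosDef.one.smul hc)).isUnit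

lemma mul_norm_le_norm_mulVec (hA : (A - c • 1).PosSemidef) (u : ι → ℝ) :
    c * ‖toLp 2 u‖ ≤ ‖toLp 2 (A *ᵥ u)‖ := by
  have hquad : c * ‖toLp 2 u‖ ^ 2 ≤ ‖toLp 2 u‖ * ‖toLp 2 (A *ᵥ u)‖ := calc
    c * ‖toLp 2 u‖ ^ 2 = u ⬝ᵥ ((c • 1 : Matrix ι ι ℝ) *ᵥ u) := by
      rw [smul_mulVec, one_mulVec, dotProduct_smul, smul_eq_mul, norm_toLp_sq]
      simp [dotProduct, sq]
    _ ≤ u ⬝ᵥ (A *ᵥ u) := by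
      simpa [sub_mulVec] using hA.dotProduct_mulVec_nonneg u
    _ = inner ℝ (toLp 2 u) (toLp 2 (A *ᵥ u)) := by
      rw [EuclideanSpace.inner_toLp_toLp, star_trivial, dotProduct_comm]
    _ ≤ _ := real_inner_le_norm _ _
  rcases (norm_nonneg (toLp 2 u)).eq_or_lt with h0 | hpos
  · simp [← h0]
  · exact le_of_mul_le_mul_left (by linear_combination hquad) hpos

lemma mul_norm_inv_mulVec_le (hc : 0 < c) (hA : (A - c • 1).PosSemidef) (w : ι → ℝ) :
    c * ‖toLp 2 (A⁻¹ *ᵥ w)‖ ≤ ‖toLp 2 w‖ := by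
  have hdet : IsUnit A.det :=
    (isUnit_iff_isUnit_det A).mp (isUnit_of_posSemidef_sub_smul_one hc hA)
  simpa [mulVec_mulVec, mul_nonsing_inv _ hdet] using mul_norm_le_norm_mulVec hA (A⁻¹ *ᵥ w)

end Euclidean

section Frobenius

variable {m k : ℕ}

lemma frobNorm_nonneg (A : Matrix (Fin m) (Fin k) ℝ) : 0 ≤ frobNorm A := Real.sqrt_nonneg _

lemma frobNorm_sq (A : Matrix (Fin m) (Fin k) ℝ) : frobNorm A ^ 2 = ∑ i, ∑ j, A i j ^ 2 :=
  Real.sq_sqrt (by positivity)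

lemma frobNorm_transpose (A : Matrix (Fin m) (Fin k) ℝ) : frobNorm Aᵀ = frobNorm A := by
  rw [frobNorm, frobNorm, Finset.sum_comm]
  rfl

lemma frobNorm_sq_le_of_rows {A : Matrix (Fin m) (Fin k) ℝ} (hA : ∀ i, ∑ j, A i j ^ 2 ≤ 1) :
    frobNorm A ^ 2 ≤ m := by
  rw [frobNorm_sq]
  exact (Finset.sum_le_sum fun i _ => hA i).trans (by simp)

lemma norm_mulVec_le_frobNorm (A : Matrix (Fin m) (Fin k) ℝ) (v : Fin k → ℝ) :
    ‖toLp 2 (A *ᵥ v)‖ ≤ frobNorm A * ‖toLp 2 v‖ := by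
  refine le_of_pow_le_pow_left₀ two_ne_zero (mul_nonneg (frobNorm_nonneg A) (norm_nonneg _)) ?_
  rw [mul_pow, frobNorm_sq, norm_toLp_sq, norm_toLp_sq, Finset.sum_mul]
  exact Finset.sum_le_sum fun i _ => by
    simpa only [mulVec, dotProduct] using Finset.sum_mul_sq_le_sq_mul_sq Finset.univ (A i) v

end Frobenius

section GramResolvent

variable {n d : ℕ} (X : Matrix (Fin n) (Fin d) ℝ)

noncomputable def gramResolvent (c : ℝ) (D : Matrix (Fin d) (Fin d) ℝ) :
    Matrix (Fin n) (Fin n) ℝ :=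
  (X * D * Xᵀ + c • 1)⁻¹

lemma posSemidef_gram_add_smul_one_sub {D : Matrix (Fin d) (Fin d) ℝ} (hD : D.PosSemidef)
    (c : ℝ) : (X * D * Xᵀ + c • 1 - c • 1).PosSemidef := by
  simpa using hD.mul_mul_conjTranspose_same X

lemma mul_norm_gramResolvent_mulVec_le {c : ℝ} (hc : 0 < c) {D : Matrix (Fin d) (Fin d) ℝ}
    (hD : D.PosSemidef) (y : Fin n → ℝ) :
    c * ‖toLp 2 (gramResolvent X c D *ᵥ y)‖ ≤ ‖toLp 2 y‖ :=
  mul_norm_inv_mulVec_le hc (posSemidef_gram_add_smul_one_sub X hD c) y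

lemma sqrt_card_mul_norm_gramResolvent_mulVec_le_one (hn : 0 < n)
    {D : Matrix (Fin d) (Fin d) ℝ} (hD : D.PosSemidef) {y : Fin n → ℝ} (hy : ∀ i, |y i| ≤ 1) :
    √n * ‖toLp 2 (gramResolvent X n D *ᵥ y)‖ ≤ 1 := by
  have hn' : (0 : ℝ) < n := Nat.cast_pos.mpr hn
  have hy' : ‖toLp 2 y‖ ≤ √n := by simpa using norm_toLp_le_sqrt_card hy
  have h : √n * (√n * ‖toLp 2 (gramResolvent X n D *ᵥ y)‖) ≤ √n * 1 := by
    rw [← mul_assoc, Real.mul_self_sqrt hn'.le, mul_one]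
    exact (mul_norm_gramResolvent_mulVec_le X hn' hD y).trans hy'
  exact le_of_mul_le_mul_left h (Real.sqrt_pos.2 hn')

lemma mul_norm_gramResolvent_sub_le {c : ℝ} (hc : 0 < c) {D₁ D₂ : Matrix (Fin d) (Fin d) ℝ}
    (h1 : D₁.PosSemidef) (h2 : D₂.PosSemidef) (y : Fin n → ℝ) :
    c * ‖toLp 2 (gramResolvent X c D₁ *ᵥ y) - toLp 2 (gramResolvent X c D₂ *ᵥ y)‖ ≤
      frobNorm X ^ 2 * frobNorm (D₂ - D₁) * ‖toLp 2 (gramResolvent X c D₂ *ᵥ y)‖ := by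
  set v₂ := gramResolvent X c D₂ *ᵥ y
  have hunit : ∀ D : Matrix (Fin d) (Fin d) ℝ, D.PosSemidef → IsUnit (X * D * Xᵀ + c • 1) :=
    fun D hD => isUnit_of_posSemidef_sub_smul_one hc (posSemidef_gram_add_smul_one_sub X hD c)
  have hsub : gramResolvent X c D₁ *ᵥ y - v₂ =
      gramResolvent X c D₁ *ᵥ (X *ᵥ ((D₂ - D₁) *ᵥ (Xᵀ *ᵥ v₂))) := by
    rw [← sub_mulVec, gramResolvent, gramResolvent,
      inv_sub_inv (iff_of_true (hunit D₁ h1) (hunit D₂ h2)), add_sub_add_right_eq_sub,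
      ← Matrix.sub_mul, ← Matrix.mul_sub]
    simp only [v₂, gramResolvent, mulVec_mulVec, Matrix.mul_assoc]
  calc c * ‖toLp 2 (gramResolvent X c D₁ *ᵥ y) - toLp 2 v₂‖
      = c * ‖toLp 2 (gramResolvent X c D₁ *ᵥ (X *ᵥ ((D₂ - D₁) *ᵥ (Xᵀ *ᵥ v₂))))‖ := by
        rw [← WithLp.toLp_sub, hsub]
    _ ≤ ‖toLp 2 (X *ᵥ ((D₂ - D₁) *ᵥ (Xᵀ *ᵥ v₂)))‖ := mul_norm_gramResolvent_mulVec_le X hc h1 _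
    _ ≤ frobNorm X * (frobNorm (D₂ - D₁) * (frobNorm Xᵀ * ‖toLp 2 v₂‖)) := by
        refine (norm_mulVec_le_frobNorm _ _).trans ?_
        gcongr
        · exact frobNorm_nonneg X
        refine (norm_mulVec_le_frobNorm _ _).trans ?_
        gcongr
        · exact frobNorm_nonneg _
        exact norm_mulVec_le_frobNorm _ _
    _ = frobNorm X ^ 2 * frobNorm (D₂ - D₁) * ‖toLp 2 v₂‖ := by
        rw [frobNorm_transpose]
        ring

end GramResolvent

theorem stmt6 {n d : ℕ} (X : Matrix (Fin n) (Fin d) ℝ) (y : Fin n → ℝ)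
    (hX : ∀ i, ∑ j, (X i j) ^ 2 ≤ 1) (hy : ∀ i, y i ∈ Set.Icc (0:ℝ) 1)
    (L : Matrix (Fin d) (Fin d) ℝ → ℝ)
    (hL : ∀ D, L D = (n : ℝ) *
      ∑ i, (((X * D * Xᵀ + (n : ℝ) • (1 : Matrix (Fin n) (Fin n) ℝ))⁻¹ *ᵥ y) i) ^ 2)
    (D₁ D₂ : Matrix (Fin d) (Fin d) ℝ) (h1 : D₁.PosSemidef) (h2 : D₂.PosSemidef) :
    |L D₁ - L D₂| ≤ 2 * frobNorm (D₁ - D₂) := by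
  rcases Nat.eq_zero_or_pos n with rfl | hn
  · simpa [hL] using frobNorm_nonneg (D₁ - D₂)
  have hn' : (0 : ℝ) < n := Nat.cast_pos.mpr hn
  set v : Matrix (Fin d) (Fin d) ℝ → EuclideanSpace ℝ (Fin n) :=
    fun D => toLp 2 (gramResolvent X n D *ᵥ y)
  have hLv : ∀ D, L D = √n ^ 2 * ‖v D‖ ^ 2 := fun D => by
    rw [hL, Real.sq_sqrt hn'.le, norm_toLp_sq]
    rfl
  have hy' : ∀ i, |y i| ≤ 1 := fun i => (abs_of_nonneg (hy i).1).trans_le (hy i).2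
  have hdiff : ‖v D₁ - v D₂‖ ≤ frobNorm (D₁ - D₂) * ‖v D₁‖ := by
    refine le_of_mul_le_mul_left ?_ hn'
    rw [norm_sub_rev, ← mul_assoc]
    refine (mul_norm_gramResolvent_sub_le X hn' h2 h1 y).trans ?_
    gcongr
    · exact frobNorm_nonneg _
    exact frobNorm_sq_le_of_rows hX
  rw [hLv, hLv, ← mul_sub, abs_mul, abs_of_nonneg (sq_nonneg _)]
  exact sq_mul_abs_norm_sq_sub_norm_sq_le (Real.sqrt_nonneg _) (frobNorm_nonneg _)
    (sqrt_card_mul_norm_gramResolvent_mulVec_le_one X hn h1 hy')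
    (sqrt_card_mul_norm_gramResolvent_mulVec_le_one X hn h2 hy') hdiff
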